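/- Let p be an odd prime and let ζ ∈ ℂ be a primitive p-th root of unity. Then ∑_{j=1}^{p-1} 1/((1-ζ^j)(1-ζ^{2j})) = (p-1)(11-p)/24. (Equivalently, the holomorphic Lefschetz coefficient a₂ = (1/(p-1))·∑_{j=1}^{p-1} 1/((1-ζ^j)(1-ζ^{2j})) equals (11-p)/24.) -/

import Mathlib

/-!
Partial fractions give `1/((1-x)(1-x²)) = 1/(4(1-x)) + 1/(2(1-x)²) + 1/(4(1+x))`. On an `n`-th root
of unity `x ≠ 1` each of the three terms is a polynomial in `x` of degree `< n`:
`1/(1-x) = -(1/n) ∑ k xᵏ`, `1/(1-x)²` is read off from `∑ k² xᵏ`, and, `n` being odd,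
`1/(1+x) = (1/2) ∑ (-x)ᵏ`. Summing `∑ cₖ xᵏ` over the nontrivial `n`-th roots of unity gives
`n c₀ - ∑ cₖ`, which reduces everything to `∑ k` and `∑ k²`.
-/

open Finset

section GeomSums

variable {K : Type*} [Field K] {n : ℕ} {x : K}

lemma sub_one_mul_sum_range_natCast_mul_pow (n : ℕ) (x : K) :
    (x - 1) * ∑ k ∈ range n, (k : K) * x ^ k =
      ((n : K) - 1) * x ^ n - ∑ k ∈ range n, x ^ k + 1 := by
  induction n with
  | zero => simp
  | succ n ih => rw [sum_range_succ, sum_range_succ, mul_add, ih]; push_cast; ring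

lemma sub_one_mul_sum_range_natCast_sq_mul_pow (n : ℕ) (x : K) :
    (x - 1) * ∑ k ∈ range n, (k : K) ^ 2 * x ^ k =
      ((n : K) - 1) ^ 2 * x ^ n - 2 * ∑ k ∈ range n, (k : K) * x ^ k +
        ∑ k ∈ range n, x ^ k - 1 := by
  induction n with
  | zero => simp
  | succ n ih =>
    rw [sum_range_succ, sum_range_succ, sum_range_succ, mul_add, ih]; push_cast; ring

lemma geom_sum_eq_zero_of_pow_eq_one (hxn : x ^ n = 1) (hx : x ≠ 1) :
    ∑ k ∈ range n, x ^ k = 0 := by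
  rw [geom_sum_eq hx, hxn, sub_self, zero_div]

lemma sum_range_natCast_mul_pow_of_pow_eq_one (hxn : x ^ n = 1) (hx : x ≠ 1) :
    ∑ k ∈ range n, (k : K) * x ^ k = -n * (1 - x)⁻¹ := by
  have h := sub_one_mul_sum_range_natCast_mul_pow n x
  rw [hxn, geom_sum_eq_zero_of_pow_eq_one hxn hx] at h
  have hy : (1 - x) * (1 - x)⁻¹ = 1 := mul_inv_cancel₀ (sub_ne_zero.2 hx.symm)
  linear_combination (-(1 - x)⁻¹) * h - (∑ k ∈ range n, (k : K) * x ^ k) * hy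

lemma sum_range_natCast_sq_mul_pow_of_pow_eq_one (hxn : x ^ n = 1) (hx : x ≠ 1) :
    ∑ k ∈ range n, (k : K) ^ 2 * x ^ k =
      -n * (n - 2) * (1 - x)⁻¹ - 2 * n * (1 - x)⁻¹ ^ 2 := by
  have h := sub_one_mul_sum_range_natCast_sq_mul_pow n x
  rw [hxn, geom_sum_eq_zero_of_pow_eq_one hxn hx,
    sum_range_natCast_mul_pow_of_pow_eq_one hxn hx] at h
  have hy : (1 - x) * (1 - x)⁻¹ = 1 := mul_inv_cancel₀ (sub_ne_zero.2 hx.symm)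
  linear_combination (-(1 - x)⁻¹) * h - (∑ k ∈ range n, (k : K) ^ 2 * x ^ k) * hy

lemma one_add_mul_sum_range_neg_pow_of_pow_eq_one (hxn : x ^ n = 1) (hn : Odd n) :
    (1 + x) * ∑ k ∈ range n, (-x) ^ k = 2 := by
  rw [← sub_neg_eq_add, mul_neg_geom_sum, hn.neg_pow, hxn]
  ring

variable [CharZero K]

lemma sum_range_natCast (n : ℕ) : ∑ k ∈ range n, (k : K) = n * (n - 1) / 2 := by
  induction n with
  | zero => simp
  | succ n ih => rw [sum_range_succ, ih]; push_cast; ring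

lemma sum_range_natCast_sq (n : ℕ) :
    ∑ k ∈ range n, (k : K) ^ 2 = n * (n - 1) * (2 * n - 1) / 6 := by
  induction n with
  | zero => simp
  | succ n ih => rw [sum_range_succ, ih]; push_cast; ring

lemma one_add_ne_zero_of_pow_eq_one (hxn : x ^ n = 1) (hn : Odd n) : 1 + x ≠ 0 :=
  left_ne_zero_of_mul <| (one_add_mul_sum_range_neg_pow_of_pow_eq_one hxn hn).trans_ne two_ne_zero

lemma inv_one_sub_mul_one_sub_sq (hx₁ : x ≠ 1) (hx₂ : 1 + x ≠ 0) :
    ((1 - x) * (1 - x ^ 2))⁻¹ = ((1 - x)⁻¹ + 2 * (1 - x)⁻¹ ^ 2 + (1 + x)⁻¹) / 4 := by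
  have : 1 - x ≠ 0 := sub_ne_zero.2 hx₁.symm
  rw [show 1 - x ^ 2 = (1 - x) * (1 + x) by ring]
  field_simp
  ring

end GeomSums

namespace IsPrimitiveRoot

variable {K : Type*} [Field K] {ζ : K} {n : ℕ}

lemma pow_pow_eq_one (hζ : IsPrimitiveRoot ζ n) (j : ℕ) : (ζ ^ j) ^ n = 1 := by
  rw [pow_right_comm, hζ.pow_eq_one, one_pow]

lemma sum_Icc_pow_pow (hζ : IsPrimitiveRoot ζ n) {k : ℕ} (hk : k < n) :
    ∑ j ∈ Icc 1 (n - 1), (ζ ^ k) ^ j = (if k = 0 then (n : K) else 0) - 1 := by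
  rw [Icc_sub_one_right_eq_Ico_of_not_isMin (by simp; omega), eq_sub_iff_add_eq, add_comm,
    ← pow_zero (ζ ^ k), ← sum_range_eq_add_Ico _ (by omega)]
  split_ifs with hk0
  · simp [hk0]
  · exact geom_sum_eq_zero_of_pow_eq_one (hζ.pow_pow_eq_one k)
      (hζ.pow_ne_one_of_pos_of_lt hk0 hk)

lemma sum_Icc_sum_range_mul_pow (hζ : IsPrimitiveRoot ζ n) (f : ℕ → K) :
    ∑ j ∈ Icc 1 (n - 1), ∑ k ∈ range n, f k * (ζ ^ j) ^ k = n * f 0 - ∑ k ∈ range n, f k := by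
  rcases n.eq_zero_or_pos with rfl | hn
  · simp
  rw [sum_comm]
  calc ∑ k ∈ range n, ∑ j ∈ Icc 1 (n - 1), f k * (ζ ^ j) ^ k
      = ∑ k ∈ range n, f k * ((if k = 0 then (n : K) else 0) - 1) := by
        refine sum_congr rfl fun k hk => ?_
        simp_rw [← pow_mul, mul_comm _ k, pow_mul, ← mul_sum]
        rw [hζ.sum_Icc_pow_pow (mem_range.1 hk)]
    _ = n * f 0 - ∑ k ∈ range n, f k := by
        simp [mul_sub, sum_sub_distrib, mul_ite, hn, mul_comm]

lemma pow_ne_one_of_mem_Icc (hζ : IsPrimitiveRoot ζ n) {j : ℕ} (hj : j ∈ Icc 1 (n - 1)) :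
    ζ ^ j ≠ 1 := by
  rw [mem_Icc] at hj
  exact hζ.pow_ne_one_of_pos_of_lt (by omega) (by omega)

variable [CharZero K]

lemma sum_inv_one_sub_pow (hζ : IsPrimitiveRoot ζ n) (hn : n ≠ 0) :
    ∑ j ∈ Icc 1 (n - 1), (1 - ζ ^ j)⁻¹ = (n - 1) / 2 := by
  have hn' : (n : K) ≠ 0 := Nat.cast_ne_zero.2 hn
  calc ∑ j ∈ Icc 1 (n - 1), (1 - ζ ^ j)⁻¹
      = ∑ j ∈ Icc 1 (n - 1), -(n : K)⁻¹ * ∑ k ∈ range n, (k : K) * (ζ ^ j) ^ k := by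
        refine sum_congr rfl fun j hj => ?_
        rw [sum_range_natCast_mul_pow_of_pow_eq_one (hζ.pow_pow_eq_one j)
          (hζ.pow_ne_one_of_mem_Icc hj)]
        field_simp
    _ = (n - 1) / 2 := by
        rw [← mul_sum, hζ.sum_Icc_sum_range_mul_pow, sum_range_natCast]
        field_simp
        ring

lemma sum_inv_one_sub_pow_sq (hζ : IsPrimitiveRoot ζ n) (hn : n ≠ 0) :
    ∑ j ∈ Icc 1 (n - 1), (1 - ζ ^ j)⁻¹ ^ 2 = -(n - 1) * (n - 5) / 12 := by
  have hn' : (n : K) ≠ 0 := Nat.cast_ne_zero.2 hn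
  calc ∑ j ∈ Icc 1 (n - 1), (1 - ζ ^ j)⁻¹ ^ 2
      = ∑ j ∈ Icc 1 (n - 1), (-(2 * n : K)⁻¹ * ∑ k ∈ range n, (k : K) ^ 2 * (ζ ^ j) ^ k -
          (n - 2) / 2 * (1 - ζ ^ j)⁻¹) := by
        refine sum_congr rfl fun j hj => ?_
        rw [sum_range_natCast_sq_mul_pow_of_pow_eq_one (hζ.pow_pow_eq_one j)
          (hζ.pow_ne_one_of_mem_Icc hj)]
        field_simp
        ring
    _ = -(n - 1) * (n - 5) / 12 := by
        rw [sum_sub_distrib, ← mul_sum, ← mul_sum, hζ.sum_Icc_sum_range_mul_pow,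
          hζ.sum_inv_one_sub_pow hn, sum_range_natCast_sq]
        field_simp
        ring

lemma sum_inv_one_add_pow (hζ : IsPrimitiveRoot ζ n) (hn : Odd n) :
    ∑ j ∈ Icc 1 (n - 1), (1 + ζ ^ j)⁻¹ = (n - 1) / 2 := by
  calc ∑ j ∈ Icc 1 (n - 1), (1 + ζ ^ j)⁻¹
      = ∑ j ∈ Icc 1 (n - 1), ∑ k ∈ range n, (-1 : K) ^ k / 2 * (ζ ^ j) ^ k := by
        refine sum_congr rfl fun j _ => inv_eq_of_mul_eq_one_right ?_
        have h := one_add_mul_sum_range_neg_pow_of_pow_eq_one (hζ.pow_pow_eq_one j) hn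
        have hsum : ∑ k ∈ range n, (-1 : K) ^ k / 2 * (ζ ^ j) ^ k =
            (∑ k ∈ range n, (-ζ ^ j) ^ k) / 2 := by
          rw [sum_div]
          exact sum_congr rfl fun k _ => by rw [neg_pow]; ring
        rw [hsum, mul_div_assoc', h, div_self two_ne_zero]
    _ = (n - 1) / 2 := by
        rw [hζ.sum_Icc_sum_range_mul_pow, ← sum_div, pow_zero, neg_one_geom_sum,
          if_neg (Nat.not_even_iff_odd.2 hn)]
        ring

end IsPrimitiveRoot

theorem sum_inv_one_sub_zeta_mul_one_sub_zeta_two_general (p : ℕ) (hodd : Odd p)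
    (ζ : ℂ) (hζ : IsPrimitiveRoot ζ p) :
    ∑ j ∈ Finset.Icc 1 (p - 1), 1 / ((1 - ζ ^ j) * (1 - ζ ^ (2 * j))) =
      ((p : ℂ) - 1) * (11 - (p : ℂ)) / 24 := by
  have h (j) (hj : j ∈ Icc 1 (p - 1)) : 1 / ((1 - ζ ^ j) * (1 - ζ ^ (2 * j))) =
      ((1 - ζ ^ j)⁻¹ + 2 * (1 - ζ ^ j)⁻¹ ^ 2 + (1 + ζ ^ j)⁻¹) / 4 := by
    rw [one_div, pow_mul']
    exact inv_one_sub_mul_one_sub_sq (hζ.pow_ne_one_of_mem_Icc hj)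
      (one_add_ne_zero_of_pow_eq_one (hζ.pow_pow_eq_one j) hodd)
  rw [sum_congr rfl h, ← sum_div, sum_add_distrib, sum_add_distrib, ← mul_sum,
    hζ.sum_inv_one_sub_pow hodd.pos.ne', hζ.sum_inv_one_sub_pow_sq hodd.pos.ne',
    hζ.sum_inv_one_add_pow hodd]
  ring

/-- For an odd prime `p` and a primitive `p`-th root of unity `ζ ∈ ℂ`,
`∑_{j=1}^{p-1} 1/((1-ζ^j)(1-ζ^{2j})) = (p-1)(11-p)/24`. -/
theorem sum_inv_one_sub_zeta_mul_one_sub_zeta_two (p : ℕ) (hp : p.Prime) (hodd : Odd p)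
    (ζ : ℂ) (hζ : IsPrimitiveRoot ζ p) :
    ∑ j ∈ Finset.Icc 1 (p - 1), 1 / ((1 - ζ ^ j) * (1 - ζ ^ (2 * j))) =
      ((p : ℂ) - 1) * (11 - (p : ℂ)) / 24 :=
  sum_inv_one_sub_zeta_mul_one_sub_zeta_two_general p hodd ζ hζ
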